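/- arXiv:1904.07525 — 2 statements merged into one kernel-verified Lean document; each statement's English description precedes it below -/
import Mathlib

section
/- Let A > 0, σ ≥ A, R > 0. There is no λ with 0 < λ < A² satisfying λ = σ·(A + q·coth(qR)) where q = √(A² − λ) > 0. Consequently the first eigenvalue of the problem u'' + 2Au' + λu = 0 on [0,R] with u'(0)=0, u'(R) = −σu(R) satisfies λ₁ ≥ A². -/
/-!
The transcendental equation has no root below `A²` because `coth > 1` on `(0, ∞)`, which makes
its right-hand side exceed `σ (A + q) > A²`.

For the eigenvalue bound, `v = e^{A x} u` removes the first-order term: `v'' = (A² - λ) v`, with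
`v'(0) = A v(0)` and `v'(R) = (A - σ) v(R)`. Integrating `v v''` by parts gives
`(A² - λ) ∫ v² = (A - σ) v(R)² - A v(0)² - ∫ v'² ≤ 0`, and `∫ v² > 0` since `u ≢ 0`.
-/

open Real Set intervalIntegral

lemma one_lt_cosh_div_sinh {x : ℝ} (hx : 0 < x) : 1 < cosh x / sinh x := by
  rw [one_lt_div (sinh_pos_iff.2 hx)]
  exact sinh_lt_cosh x

lemma sq_lt_mul_add_mul_coth {A σ q R : ℝ} (hA : 0 < A) (hσ : A ≤ σ) (hq : 0 < q) (hR : 0 < R) :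
    A ^ 2 < σ * (A + q * (cosh (q * R) / sinh (q * R))) := by
  have hcoth := one_lt_cosh_div_sinh (mul_pos hq hR)
  have hqcoth : q < q * (cosh (q * R) / sinh (q * R)) := lt_mul_of_one_lt_right hq hcoth
  nlinarith

lemma hasDerivAt_exp_mul_mul (A : ℝ) {x u' : ℝ} {u : ℝ → ℝ} (hu : HasDerivAt u u' x) :
    HasDerivAt (fun y => exp (A * y) * u y) (exp (A * x) * (A * u x + u')) x := by
  have hexp : HasDerivAt (fun y => exp (A * y)) (exp (A * x) * A) x := by
    simpa using ((hasDerivAt_id x).const_mul A).exp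
  exact (hexp.fun_mul hu).congr_deriv (by ring)

lemma mul_integral_sq_eq_of_hasDerivAt {v w : ℝ → ℝ} {μ a b : ℝ}
    (hv : ∀ x ∈ uIcc a b, HasDerivAt v (w x) x) (hw : ∀ x ∈ uIcc a b, HasDerivAt w (μ * v x) x) :
    μ * ∫ x in a..b, v x ^ 2 = v b * w b - v a * w a - ∫ x in a..b, w x ^ 2 := by
  have hvc : ContinuousOn v (uIcc a b) := fun x hx => (hv x hx).continuousAt.continuousWithinAt
  have hwc : ContinuousOn w (uIcc a b) := fun x hx => (hw x hx).continuousAt.continuousWithinAt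
  have hparts := integral_mul_deriv_eq_deriv_mul hv hw hwc.intervalIntegrable
    (hvc.const_smul μ).intervalIntegrable
  simp only [sq, ← integral_const_mul]
  convert hparts using 3; ring

lemma sq_le_of_robin_eigenfunction {A σ R lam : ℝ} {u : ℝ → ℝ} (hA : 0 ≤ A) (hσ : A ≤ σ)
    (hR : 0 < R) (hu : Differentiable ℝ u) (hu' : Differentiable ℝ (deriv u))
    (hnz : ∃ x ∈ Icc 0 R, u x ≠ 0)
    (hode : ∀ x ∈ Icc 0 R, deriv (deriv u) x + 2 * A * deriv u x + lam * u x = 0)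
    (hbc0 : deriv u 0 = 0) (hbcR : deriv u R = -σ * u R) :
    A ^ 2 ≤ lam := by
  set v : ℝ → ℝ := fun x => exp (A * x) * u x
  set w : ℝ → ℝ := fun x => exp (A * x) * (A * u x + deriv u x)
  have hv : ∀ x ∈ uIcc 0 R, HasDerivAt v (w x) x := fun x _ =>
    hasDerivAt_exp_mul_mul A (hu x).hasDerivAt
  have hw : ∀ x ∈ uIcc 0 R, HasDerivAt w ((A ^ 2 - lam) * v x) x := by
    intro x hx
    rw [uIcc_of_le hR.le] at hx
    refine (hasDerivAt_exp_mul_mul A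
      (((hu x).hasDerivAt.const_mul A).fun_add (hu' x).hasDerivAt)).congr_deriv ?_
    linear_combination exp (A * x) * hode x hx
  have hvR : v R * w R = (A - σ) * v R ^ 2 := by simp only [v, w, hbcR]; ring
  have hv0 : v 0 * w 0 = A * v 0 ^ 2 := by simp only [v, w, hbc0]; ring
  have hw2 : 0 ≤ ∫ x in (0 : ℝ)..R, w x ^ 2 := integral_nonneg hR.le fun x _ => sq_nonneg (w x)
  obtain ⟨x₀, hx₀, hux₀⟩ := hnz
  have hvc : Continuous v := (continuous_exp.comp (continuous_const_mul A)).mul hu.continuous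
  have hv2 : 0 < ∫ x in (0 : ℝ)..R, v x ^ 2 :=
    integral_pos hR (hvc.pow 2).continuousOn (fun x _ => sq_nonneg (v x))
      ⟨x₀, hx₀, sq_pos_of_ne_zero (mul_ne_zero (exp_ne_zero _) hux₀)⟩
  have hneg : (A ^ 2 - lam) * ∫ x in (0 : ℝ)..R, v x ^ 2 ≤ 0 := by
    rw [mul_integral_sq_eq_of_hasDerivAt hv hw, hvR, hv0]
    nlinarith [sq_nonneg (v R), sq_nonneg (v 0)]
  linarith [nonpos_of_mul_nonpos_left hneg hv2]

/-- For A > 0, σ ≥ A, R > 0: no λ ∈ (0, A²) satisfies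
λ = σ(A + q coth(qR)) with q = √(A²−λ); consequently every eigenvalue of
u'' + 2Au' + λu = 0 on [0,R] with u'(0)=0, u'(R) = −σu(R) satisfies λ ≥ A². -/
theorem stmt4 (A σ R : ℝ) (hA : 0 < A) (hσ : A ≤ σ) (hR : 0 < R) :
    (¬ ∃ lam : ℝ, 0 < lam ∧ lam < A ^ 2 ∧
        lam = σ * (A + Real.sqrt (A ^ 2 - lam) *
          (Real.cosh (Real.sqrt (A ^ 2 - lam) * R) /
            Real.sinh (Real.sqrt (A ^ 2 - lam) * R)))) ∧
      ∀ (lam : ℝ) (u : ℝ → ℝ), ContDiff ℝ 2 u →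
        (∃ x ∈ Set.Icc (0 : ℝ) R, u x ≠ 0) →
        (∀ x ∈ Set.Icc (0 : ℝ) R,
          deriv (deriv u) x + 2 * A * deriv u x + lam * u x = 0) →
        deriv u 0 = 0 → deriv u R = -σ * u R → A ^ 2 ≤ lam := by
  constructor
  · rintro ⟨lam, -, hlam, heq⟩
    have hq : 0 < √(A ^ 2 - lam) := sqrt_pos.2 (by linarith)
    linarith [sq_lt_mul_add_mul_coth hA hσ hq hR]
  · intro lam u hu hnz hode hbc0 hbcR
    exact sq_le_of_robin_eigenfunction hA.le hσ hR (hu.differentiable (by norm_num))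
      hu.differentiable_deriv_two hnz hode hbc0 hbcR
end

section
/- Let R > 0 and σ > 0. The first eigenvalue λ₁ of the problem u'' + λu = 0 on [0,R] with u'(0) = σu(0), u'(R) = 0, equals c₁²/R², where c₁ is the smallest positive zero of x·tan(x) − Rσ. Consequently λ₁ > π²σ/(π²R + 4R²σ). -/
/-!
A solution of `u'' = -λu` is determined by `(u 0, u' 0)`, since `(u, u')` solves a linear, hence
Lipschitz, first-order system. If `λ ≤ 0`, then `(u u')' = u'² - λu² ≥ 0`, so
`σ u(0)² = (u u')(0) ≤ (u u')(R) = 0`; thus `u(0) = u'(0) = 0` and `u = 0`. If `λ = s² > 0`, then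
`u = u(0) (cos st + (σ/s) sin st)` with `u(0) ≠ 0`, and `u'(R) = 0` says exactly that `x = sR`
solves `x tan x = Rσ`; conversely every positive root gives an eigenfunction, so `λ₁ = c₁²/R²`.
Since `x sin x - Rσ cos x` changes sign on `[0, π/2]`, `c₁ < π/2`, and the Becker–Stark inequality
`tan x < π²x/(π² - 4x²)` turns `c₁ tan c₁ = Rσ` into the lower bound.
-/

open Real Set

theorem eq_and_deriv_eq_of_deriv_deriv_eq_mul {u v : ℝ → ℝ} {a b c : ℝ}
    (hu : ContDiff ℝ 2 u) (hv : ContDiff ℝ 2 v)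
    (hu'' : ∀ x ∈ Icc a b, deriv (deriv u) x = c * u x)
    (hv'' : ∀ x ∈ Icc a b, deriv (deriv v) x = c * v x)
    (h₀ : u a = v a) (h₁ : deriv u a = deriv v a) :
    ∀ x ∈ Icc a b, u x = v x ∧ deriv u x = deriv v x := by
  let L : ℝ × ℝ →L[ℝ] ℝ × ℝ :=
    (ContinuousLinearMap.snd ℝ ℝ ℝ).prod (c • ContinuousLinearMap.fst ℝ ℝ ℝ)
  have hsol : ∀ w : ℝ → ℝ, ContDiff ℝ 2 w → (∀ x ∈ Icc a b, deriv (deriv w) x = c * w x) →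
      ∀ x ∈ Icc a b, HasDerivAt (fun t => (w t, deriv w t)) (L (w x, deriv w x)) x := by
    intro w hw hw'' x hx
    have h := ((hw.differentiable two_ne_zero x).hasDerivAt).prodMk
      (hw.differentiable_deriv_two x).hasDerivAt
    simpa [L, hw'' x hx] using h
  have hcont : ∀ w : ℝ → ℝ, ContDiff ℝ 2 w → Continuous fun t => (w t, deriv w t) :=
    fun w hw => hw.continuous.prodMk (hw.continuous_deriv one_le_two)
  intro x hx
  simpa using ODE_solution_unique_of_mem_Icc_right (v := fun _ => L) (s := fun _ => univ)
    (fun _ _ => L.lipschitz.lipschitzOnWith) (hcont u hu).continuousOn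
    (fun t ht => (hsol u hu hu'' t (Ico_subset_Icc_self ht)).hasDerivWithinAt) (fun _ _ => trivial)
    (hcont v hv).continuousOn
    (fun t ht => (hsol v hv hv'' t (Ico_subset_Icc_self ht)).hasDerivWithinAt) (fun _ _ => trivial)
    (by simp [h₀, h₁]) hx

noncomputable def trigComb (a b s t : ℝ) : ℝ := a * cos (s * t) + b * sin (s * t)

theorem hasDerivAt_trigComb (a b s t : ℝ) :
    HasDerivAt (trigComb a b s) (trigComb (s * b) (-(s * a)) s t) t := by
  have hst : HasDerivAt (fun t => s * t) s t := by simpa using (hasDerivAt_id t).const_mul s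
  refine ((((hasDerivAt_cos _).comp t hst).const_mul a).add
    (((hasDerivAt_sin _).comp t hst).const_mul b)).congr_deriv ?_
  simp only [trigComb]
  ring

theorem deriv_trigComb (a b s : ℝ) : deriv (trigComb a b s) = trigComb (s * b) (-(s * a)) s :=
  funext fun t => (hasDerivAt_trigComb a b s t).deriv

theorem deriv_deriv_trigComb (a b s t : ℝ) :
    deriv (deriv (trigComb a b s)) t = -s ^ 2 * trigComb a b s t := by
  simp only [deriv_trigComb, trigComb]
  ring

theorem contDiff_trigComb (a b s : ℝ) : ContDiff ℝ 2 (trigComb a b s) := by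
  unfold trigComb
  fun_prop

theorem trigComb_zero (a b s : ℝ) : trigComb a b s 0 = a := by simp [trigComb]

theorem mul_tan_eq_iff {x r : ℝ} (hx : x ≠ 0) (hr : r ≠ 0) :
    x * tan x = r ↔ x * sin x = r * cos x := by
  rcases eq_or_ne (cos x) 0 with hcos | hcos
  · have hsin : sin x ≠ 0 := fun h => by simpa [h, hcos] using sin_sq_add_cos_sq x
    simp [tan_eq_sin_div_cos, hcos, hx, hsin, eq_comm (a := (0 : ℝ)), hr]
  · rw [tan_eq_sin_div_cos, mul_div_assoc', div_eq_iff hcos]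

theorem exists_mem_Ioo_mul_tan_eq {r : ℝ} (hr : 0 < r) :
    ∃ x ∈ Ioo 0 (π / 2), x * tan x = r := by
  have hcont : ContinuousOn (fun x => x * sin x - r * cos x) (Icc 0 (π / 2)) := by fun_prop
  obtain ⟨x, hx, hx0⟩ := intermediate_value_Ioo (by positivity) hcont
    (by simp [hr, pi_pos] : (0 : ℝ) ∈ Ioo _ _)
  exact ⟨x, hx, (mul_tan_eq_iff hx.1.ne' hr.ne').mpr (sub_eq_zero.mp hx0)⟩

theorem strictAntiOn_mul_cos_div_sin : StrictAntiOn (fun t => t * cos t / sin t) (Ioo 0 π) := by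
  have hsin : ∀ t ∈ Ioo 0 π, 0 < sin t := fun t ht => sin_pos_of_pos_of_lt_pi ht.1 ht.2
  refine strictAntiOn_of_deriv_neg (convex_Ioo 0 π)
    (ContinuousOn.div (by fun_prop) (by fun_prop) fun t ht => (hsin t ht).ne') fun t ht => ?_
  rw [interior_Ioo] at ht
  have hd : HasDerivAt (fun t => t * cos t / sin t)
      (((1 * cos t + t * -sin t) * sin t - t * cos t * cos t) / sin t ^ 2) t :=
    ((hasDerivAt_id t).mul (hasDerivAt_cos t)).div (hasDerivAt_sin t) (hsin t ht).ne'
  rw [hd.deriv]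
  refine div_neg_of_neg_of_pos ?_ (pow_pos (hsin t ht) 2)
  have h2t := sin_lt (by linarith [ht.1] : 0 < 2 * t)
  rw [sin_two_mul] at h2t
  have hnum : (1 * cos t + t * -sin t) * sin t - t * cos t * cos t = sin t * cos t - t := by
    linear_combination (-t) * sin_sq_add_cos_sq t
  linarith

theorem mul_cos_sub_mul_sin_pos_of_lt {a t x : ℝ} (ht : 0 < t) (htx : t < x) (hx : x < π)
    (h : 0 ≤ x * cos x - a * sin x) : 0 < t * cos t - a * sin t := by
  have hsin_t := sin_pos_of_pos_of_lt_pi ht (htx.trans hx)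
  have hsin_x := sin_pos_of_pos_of_lt_pi (ht.trans htx) hx
  have hcot := strictAntiOn_mul_cos_div_sin ⟨ht, htx.trans hx⟩ ⟨ht.trans htx, hx⟩ htx
  have hax : a ≤ x * cos x / sin x := by rw [le_div_iff₀ hsin_x]; linarith
  have hat : a < t * cos t / sin t := hax.trans_lt hcot
  rw [lt_div_iff₀ hsin_t] at hat
  linarith

theorem tan_lt_becker_stark {x : ℝ} (hx₀ : 0 < x) (hx : x < π / 2) :
    tan x < π ^ 2 * x / (π ^ 2 - 4 * x ^ 2) := by
  -- `g` vanishes at `0` and `π / 2`, and `g' = 4 t k(t)` where `k` changes sign only once on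
  -- `(0, π / 2)`, because `k(t) / sin t = t cot t - (π² - 8) / 4` is decreasing.
  let g : ℝ → ℝ := fun t => π ^ 2 * t * cos t - (π ^ 2 - 4 * t ^ 2) * sin t
  let k : ℝ → ℝ := fun t => t * cos t - (π ^ 2 - 8) / 4 * sin t
  have hg : ∀ t, HasDerivAt g (4 * t * k t) t := fun t => by
    refine ((((hasDerivAt_id t).const_mul (π ^ 2)).mul (hasDerivAt_cos t)).sub
      ((((hasDerivAt_pow 2 t).const_mul 4).const_sub (π ^ 2)).mul (hasDerivAt_sin t))).congr_deriv ?_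
    simp only [k, id, Nat.cast_ofNat]
    ring
  have hgc : Continuous g := by fun_prop
  have hgx : 0 < g x := by
    rcases le_or_gt 0 (k x) with hkx | hkx
    · have hmono : StrictMonoOn g (Icc 0 x) :=
        strictMonoOn_of_deriv_pos (convex_Icc 0 x) hgc.continuousOn fun t ht => by
          rw [interior_Icc] at ht
          rw [(hg t).deriv]
          exact mul_pos (by linarith [ht.1])
            (mul_cos_sub_mul_sin_pos_of_lt ht.1 ht.2 (by linarith) hkx)
      simpa [g] using hmono ⟨le_rfl, hx₀.le⟩ ⟨hx₀.le, le_rfl⟩ hx₀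
    · have hanti : StrictAntiOn g (Icc x (π / 2)) :=
        strictAntiOn_of_deriv_neg (convex_Icc _ _) hgc.continuousOn fun t ht => by
          rw [interior_Icc] at ht
          rw [(hg t).deriv]
          refine mul_neg_of_pos_of_neg (by linarith [ht.1]) (lt_of_not_ge fun hkt =>
            hkx.not_ge (mul_cos_sub_mul_sin_pos_of_lt hx₀ ht.1 (by linarith [ht.2]) hkt).le)
      have := hanti ⟨le_rfl, hx.le⟩ ⟨hx.le, le_rfl⟩ hx
      simp only [g, cos_pi_div_two, sin_pi_div_two] at this
      linarith
  have hπ8 : 8 < π ^ 2 := by nlinarith [pi_gt_three]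
  rw [tan_eq_sin_div_cos, div_lt_div_iff₀ (cos_pos_of_mem_Ioo ⟨by linarith, hx⟩) (by nlinarith)]
  linarith [hgx]

theorem pi_sq_mul_div_lt_sq_div_sq_of_mul_tan_eq {R σ c : ℝ} (hR : 0 < R) (hσ : 0 < σ)
    (hc₀ : 0 < c) (hc : c < π / 2) (h : c * tan c = R * σ) :
    π ^ 2 * σ / (π ^ 2 * R + 4 * R ^ 2 * σ) < c ^ 2 / R ^ 2 := by
  have hpos : 0 < π ^ 2 - 4 * c ^ 2 := by nlinarith [pi_pos]
  have htan := tan_lt_becker_stark hc₀ hc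
  rw [lt_div_iff₀ hpos] at htan
  have key : R * σ * (π ^ 2 - 4 * c ^ 2) < π ^ 2 * c ^ 2 := by
    rw [← h]
    nlinarith
  rw [div_lt_div_iff₀ (by positivity) (by positivity)]
  nlinarith

def IsRobinNeumannEigenfunction (R σ lam : ℝ) (u : ℝ → ℝ) : Prop :=
  ContDiff ℝ 2 u ∧ (∃ x ∈ Icc 0 R, u x ≠ 0) ∧
    (∀ x ∈ Icc 0 R, deriv (deriv u) x + lam * u x = 0) ∧
    deriv u 0 = σ * u 0 ∧ deriv u R = 0

namespace IsRobinNeumannEigenfunction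

variable {R σ lam : ℝ} {u : ℝ → ℝ}

theorem deriv_deriv_eq (h : IsRobinNeumannEigenfunction R σ lam u) :
    ∀ x ∈ Icc 0 R, deriv (deriv u) x = -lam * u x :=
  fun x hx => by linarith [h.2.2.1 x hx]

theorem apply_zero_ne_zero (h : IsRobinNeumannEigenfunction R σ lam u) : u 0 ≠ 0 := by
  intro h₀
  obtain ⟨x, hx, hux⟩ := h.2.1
  exact hux (eq_and_deriv_eq_of_deriv_deriv_eq_mul h.1 contDiff_const h.deriv_deriv_eq
    (fun _ _ => by simp) (by simpa using h₀) (by simp [h.2.2.2.1, h₀]) x hx).1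

theorem pos (h : IsRobinNeumannEigenfunction R σ lam u) (hσ : 0 < σ) : 0 < lam := by
  obtain ⟨hu, ⟨x₀, hx₀, -⟩, -, hbc₀, hbcR⟩ := id h
  have hR₀ : 0 ≤ R := hx₀.1.trans hx₀.2
  by_contra! hlam
  have hmono : MonotoneOn (fun x => u x * deriv u x) (Icc 0 R) := by
    have hd : ∀ x, HasDerivAt (fun x => u x * deriv u x)
        (deriv u x * deriv u x + u x * deriv (deriv u) x) x := fun x =>
      ((hu.differentiable two_ne_zero x).hasDerivAt).mul (hu.differentiable_deriv_two x).hasDerivAt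
    refine monotoneOn_of_deriv_nonneg (convex_Icc 0 R)
      (fun x _ => (hd x).continuousAt.continuousWithinAt)
      (fun x _ => (hd x).differentiableAt.differentiableWithinAt) fun x hx => ?_
    rw [interior_Icc] at hx
    rw [(hd x).deriv, h.deriv_deriv_eq x (Ioo_subset_Icc_self hx)]
    nlinarith [mul_self_nonneg (deriv u x), mul_self_nonneg (u x)]
  have h0R := hmono ⟨le_rfl, hR₀⟩ ⟨hR₀, le_rfl⟩ hR₀
  simp only [hbc₀, hbcR, mul_zero] at h0R
  have hsq : u 0 ^ 2 = 0 := le_antisymm (by nlinarith) (sq_nonneg _)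
  exact h.apply_zero_ne_zero (pow_eq_zero_iff two_ne_zero |>.mp hsq)

theorem sqrt_mul_mul_tan_eq (h : IsRobinNeumannEigenfunction R σ lam u) (hR : 0 < R)
    (hσ : 0 < σ) : √lam * R * tan (√lam * R) = R * σ := by
  have hs : 0 < √lam := sqrt_pos.mpr (h.pos hσ)
  set s := √lam with hs_def
  have hu := eq_and_deriv_eq_of_deriv_deriv_eq_mul h.1 (contDiff_trigComb (u 0) (σ * u 0 / s) s)
    h.deriv_deriv_eq (fun x _ => by rw [deriv_deriv_trigComb, hs_def, sq_sqrt (h.pos hσ).le])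
    (trigComb_zero ..).symm (by rw [deriv_trigComb, trigComb_zero, h.2.2.2.1]; field_simp)
  have hend := (hu R ⟨hR.le, le_rfl⟩).2
  rw [h.2.2.2.2, deriv_trigComb, trigComb, mul_div_cancel₀ _ hs.ne'] at hend
  have hsR : s * sin (s * R) = σ * cos (s * R) :=
    mul_left_cancel₀ h.apply_zero_ne_zero (by linear_combination hend)
  rw [mul_tan_eq_iff (by positivity) (by positivity)]
  linear_combination R * hsR

end IsRobinNeumannEigenfunction

theorem isRobinNeumannEigenfunction_trigComb_of_mul_tan_eq {R σ x : ℝ} (hR : 0 < R)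
    (hσ : σ ≠ 0) (hx : x ≠ 0) (h : x * tan x = R * σ) :
    IsRobinNeumannEigenfunction R σ (x ^ 2 / R ^ 2) (trigComb 1 (σ * R / x) (x / R)) := by
  rw [mul_tan_eq_iff hx (mul_ne_zero hR.ne' hσ)] at h
  refine ⟨contDiff_trigComb .., ⟨0, ⟨le_rfl, hR.le⟩, by simp [trigComb_zero]⟩, fun t _ => ?_, ?_, ?_⟩
  · rw [deriv_deriv_trigComb]
    ring
  · rw [deriv_trigComb, trigComb_zero, trigComb_zero]
    field_simp
  · rw [deriv_trigComb, trigComb, div_mul_cancel₀ _ hR.ne']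
    field_simp
    linear_combination -h

/-- For R > 0, σ > 0, the first eigenvalue λ₁ of u'' + λu = 0 on [0,R] with
u'(0) = σu(0), u'(R) = 0 equals c₁²/R², where c₁ is the smallest positive zero
of x tan x − Rσ; consequently λ₁ > π²σ/(π²R + 4R²σ). -/
theorem stmt13 (R σ lam₁ c₁ : ℝ) (hR : 0 < R) (hσ : 0 < σ)
    (hlam : IsLeast {lam : ℝ | ∃ u : ℝ → ℝ, ContDiff ℝ 2 u ∧
      (∃ x ∈ Set.Icc (0 : ℝ) R, u x ≠ 0) ∧
      (∀ x ∈ Set.Icc (0 : ℝ) R, deriv (deriv u) x + lam * u x = 0) ∧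
      deriv u 0 = σ * u 0 ∧ deriv u R = 0} lam₁)
    (hc : IsLeast {x : ℝ | 0 < x ∧ x * Real.tan x - R * σ = 0} c₁) :
    lam₁ = c₁ ^ 2 / R ^ 2 ∧
      lam₁ > Real.pi ^ 2 * σ / (Real.pi ^ 2 * R + 4 * R ^ 2 * σ) := by
  obtain ⟨⟨u, hu : IsRobinNeumannEigenfunction R σ lam₁ u⟩, hlam_le⟩ := hlam
  obtain ⟨⟨hc₀, hc_root⟩, hc_le⟩ := hc
  have hc_tan : c₁ * tan c₁ = R * σ := sub_eq_zero.mp hc_root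
  have hlam_eq : lam₁ = c₁ ^ 2 / R ^ 2 := by
    refine le_antisymm (hlam_le ⟨_, isRobinNeumannEigenfunction_trigComb_of_mul_tan_eq hR hσ.ne'
      hc₀.ne' hc_tan⟩) ?_
    have hlam₀ := hu.pos hσ
    have hc_le_root : c₁ ≤ √lam₁ * R :=
      hc_le ⟨by positivity, sub_eq_zero.mpr (hu.sqrt_mul_mul_tan_eq hR hσ)⟩
    rw [div_le_iff₀ (by positivity), ← sq_sqrt hlam₀.le, ← mul_pow]
    exact pow_le_pow_left₀ hc₀.le hc_le_root 2
  obtain ⟨x, hx, hx_tan⟩ := exists_mem_Ioo_mul_tan_eq (mul_pos hR hσ)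
  have hc_lt : c₁ < π / 2 := (hc_le ⟨hx.1, sub_eq_zero.mpr hx_tan⟩).trans_lt hx.2
  exact ⟨hlam_eq, hlam_eq ▸ pi_sq_mul_div_lt_sq_div_sq_of_mul_tan_eq hR hσ hc₀ hc_lt hc_tan⟩
end
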